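/- Let F be a field, V an infinite-dimensional F-vector space with basis (e_i)_{i∈I}, V* its dual, V̄ = V ⊕ V*, and f the alternating bilinear form on V̄ given by f((a,α),(b,β)) = α(b) − β(a). For i ∈ I let η_i ∈ V* be determined by η_i(e_j) = δ_{ij}, and let W = span{(e_i, η_i) : i ∈ I} ≤ V̄. Then W is a generator of S_f (a maximal totally f-isotropic subspace), W ∩ (V ⊕ 0) = 0, and W + (V ⊕ 0) is a proper subspace of V̄. In particular S_f admits a pair of opposite generators which is not a complementary pair. -/

import Mathlib

/-!
The span of the `(e_i, η_i)` is the graph of `Basis.toDual : V → V*`, `e_i ↦ η_i`, which is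
symmetric as a bilinear form. The graph of any symmetric `β : V → V*` is a generator: if
`(v, φ)` is `f`-orthogonal to every `(u, β u)`, then `φ u = β u v = β v u`, so `φ = β v`.
It meets `V ⊕ 0` in `ker β ⊕ 0`, and its sum with `V ⊕ 0` is `V ⊕ range β`. Here `β`
is injective, but not surjective: `β v` vanishes on all `e_i` outside the finite support of
`v`, so the functional equal to `1` on every `e_i` is not of this form.
-/

/-- The symplectic form `f((a,α),(b,β)) = α(b) − β(a)` on `V̄ = V ⊕ V*`. -/
def symForm {F V : Type*} [Field F] [AddCommGroup V] [Module F V]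
    (p q : V × Module.Dual F V) : F :=
  p.2 q.1 - q.2 p.1

/-- A subspace of `V̄` is totally `f`-isotropic. -/
def SymTotIso {F V : Type*} [Field F] [AddCommGroup V] [Module F V]
    (W : Submodule F (V × Module.Dual F V)) : Prop :=
  ∀ x ∈ W, ∀ y ∈ W, symForm x y = 0

/-- A generator of the symplectic polar space `S_f`: a maximal totally
`f`-isotropic subspace of `V̄`. -/
def SymGen {F V : Type*} [Field F] [AddCommGroup V] [Module F V]
    (W : Submodule F (V × Module.Dual F V)) : Prop :=
  SymTotIso W ∧
    ∀ W' : Submodule F (V × Module.Dual F V), SymTotIso W' → W ≤ W' → W' = W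

section Graph

variable {F V : Type*} [Field F] [AddCommGroup V] [Module F V] {β : LinearMap.BilinForm F V}

theorem symTotIso_graph (hβ : β.IsSymm) : SymTotIso β.graph := by
  intro x (hx : x.2 = β x.1) y (hy : y.2 = β y.1)
  rw [symForm, hx, hy, hβ.eq, sub_self]

theorem SymTotIso.eq_graph_of_graph_le (hβ : β.IsSymm) {W : Submodule F (V × Module.Dual F V)}
    (hW : SymTotIso W) (hle : β.graph ≤ W) : W = β.graph := by
  refine le_antisymm (fun ⟨v, φ⟩ hv => ?_) hle
  ext u
  have h := hW _ (hle (show (u, β u) ∈ β.graph from rfl)) _ hv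
  rw [symForm, sub_eq_zero] at h
  exact h.symm.trans (hβ.eq u v)

theorem symGen_graph (hβ : β.IsSymm) : SymGen β.graph :=
  ⟨symTotIso_graph hβ, fun _ hW hle => hW.eq_graph_of_graph_le hβ hle⟩

theorem graph_inf_prod_top_bot_eq_bot (hβ : Function.Injective β) :
    β.graph ⊓ (⊤ : Submodule F V).prod ⊥ = ⊥ := by
  refine eq_bot_iff.mpr fun ⟨v, φ⟩ ⟨(hφ : φ = β v), _, (hφ0 : φ = 0)⟩ => ?_
  have hv : v = 0 := hβ (by rw [← hφ, hφ0, map_zero])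
  simp [hv, hφ0]

theorem graph_sup_prod_top_bot_ne_top (hβ : ¬ Function.Surjective β) :
    β.graph ⊔ (⊤ : Submodule F V).prod ⊥ ≠ ⊤ := by
  refine fun htop => hβ fun φ => ?_
  obtain ⟨⟨v, ψ⟩, (hψ : ψ = β v), ⟨w, χ⟩, ⟨_, (hχ : χ = 0)⟩, hsum⟩ :=
    Submodule.mem_sup.mp (htop ▸ Submodule.mem_top : ((0 : V), φ) ∈ _)
  exact ⟨v, by simpa [hψ, hχ] using congrArg Prod.snd hsum⟩

end Graph

theorem LinearMap.span_range_basis_pair_eq_graph {R M N ι : Type*} [Semiring R]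
    [AddCommMonoid M] [Module R M] [AddCommMonoid N] [Module R N] (b : Module.Basis ι R M)
    (f : M →ₗ[R] N) : Submodule.span R (Set.range fun i => (b i, f (b i))) = f.graph := by
  rw [LinearMap.graph_eq_range_prod, LinearMap.range_eq_map, ← b.span_eq, Submodule.map_span,
    ← Set.range_comp]
  rfl

namespace Module.Basis

variable {R M ι : Type*} [CommSemiring R] [AddCommMonoid M] [Module R M] [DecidableEq ι]
  (b : Basis ι R M)

theorem toDual_flip : b.toDual.flip = b.toDual :=
  b.ext fun i => b.ext fun j => by simp [toDual_apply, eq_comm]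

theorem toDual_isSymm : LinearMap.BilinForm.IsSymm b.toDual :=
  ⟨fun x y => LinearMap.congr_fun₂ b.toDual_flip y x⟩

theorem toDual_not_surjective [Infinite ι] [Nontrivial R] : ¬ Function.Surjective b.toDual := by
  intro h
  obtain ⟨v, hv⟩ := h (b.constr R fun _ => 1)
  obtain ⟨i, hi⟩ := Infinite.exists_notMem_finset (b.repr v).support
  have := LinearMap.congr_fun hv (b i)
  rw [toDual_apply_left, constr_basis, Finsupp.notMem_support_iff.mp hi] at this
  exact zero_ne_one this

end Module.Basis

/-- For a basis `(e_i)` of an infinite-dimensional `V` and the coordinate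
functionals `η_i`, the span `W` of the vectors `(e_i, η_i)` is a generator of `S_f`
which is opposite to, but not a complement of, the generator `V ⊕ 0`. -/
theorem stmt_9 {F V : Type*} [Field F] [AddCommGroup V] [Module F V]
    {I : Type*} [Infinite I] (b : Module.Basis I F V) :
    SymGen (Submodule.span F
      (Set.range fun i : I => ((b i, b.coord i) : V × Module.Dual F V))) ∧
    Submodule.span F (Set.range fun i : I => ((b i, b.coord i) : V × Module.Dual F V)) ⊓
      (⊤ : Submodule F V).prod (⊥ : Submodule F (Module.Dual F V)) = ⊥ ∧
    Submodule.span F (Set.range fun i : I => ((b i, b.coord i) : V × Module.Dual F V)) ⊔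
      (⊤ : Submodule F V).prod (⊥ : Submodule F (Module.Dual F V)) ≠ ⊤ := by
  classical
  have hW : Submodule.span F (Set.range fun i : I => ((b i, b.coord i) : V × Module.Dual F V)) =
      b.toDual.graph := by
    simp_rw [← b.coe_toDual_self]
    exact LinearMap.span_range_basis_pair_eq_graph b b.toDual
  rw [hW]
  exact ⟨symGen_graph b.toDual_isSymm, graph_inf_prod_top_bot_eq_bot b.toDual_injective,
    graph_sup_prod_top_bot_ne_top b.toDual_not_surjective⟩
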